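/- Let a > 0, c ≥ 0, t₀ ≤ t, let g : ℝ → ℝ be nonnegative and nonincreasing on [t₀, t], and let y : ℝ → ℝ be differentiable on [t₀, t] with derivative y′ satisfying y′(s) + a·y(s) ≤ c + a·g(s) for every s ∈ [t₀, t]. Then y(t) ≤ e^{−a(t−t₀)} y(t₀) + c/a + g(t₀). -/

import Mathlib

theorem stmt_4 (a c t₀ t : ℝ) (ha : 0 < a) (hc : 0 ≤ c) (ht : t₀ ≤ t)
    (g y y' : ℝ → ℝ)
    (hg_nonneg : ∀ s ∈ Set.Icc t₀ t, 0 ≤ g s)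
    (hg_mono : AntitoneOn g (Set.Icc t₀ t))
    (hy : ∀ s ∈ Set.Icc t₀ t, HasDerivWithinAt y (y' s) (Set.Icc t₀ t) s)
    (hineq : ∀ s ∈ Set.Icc t₀ t, y' s + a * y s ≤ c + a * g s) :
    y t ≤ Real.exp (-a * (t - t₀)) * y t₀ + c / a + g t₀ := by
  have ht₀mem : t₀ ∈ Set.Icc t₀ t := Set.left_mem_Icc.2 ht
  have htmem : t ∈ Set.Icc t₀ t := Set.right_mem_Icc.2 ht
  set K : ℝ := c / a + g t₀ with hKdef
  have hK0 : 0 ≤ K := add_nonneg (div_nonneg hc ha.le) (hg_nonneg t₀ ht₀mem)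
  have haK : a * K = c + a * g t₀ := by
    field_simp [hKdef]
    rw [hKdef, mul_add, mul_div_assoc', mul_div_cancel_left₀ c ha.ne']
  set f : ℝ → ℝ := fun s => Real.exp (a * (s - t₀)) * (y s - K) with hfdef
  have hderiv : ∀ s ∈ Set.Icc t₀ t,
      HasDerivWithinAt f (Real.exp (a * (s - t₀)) * (y' s + a * (y s - K)))
        (Set.Icc t₀ t) s := by
    intro s hs
    have h2 : HasDerivAt (fun s => a * (s - t₀)) a s := by
      simpa using ((hasDerivAt_id s).sub_const t₀).const_mul a
    have h1 : HasDerivWithinAt (fun s => Real.exp (a * (s - t₀)))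
        (Real.exp (a * (s - t₀)) * a) (Set.Icc t₀ t) s := h2.exp.hasDerivWithinAt
    have h3 : HasDerivWithinAt (fun s => y s - K) (y' s) (Set.Icc t₀ t) s :=
      (hy s hs).sub_const K
    have : HasDerivWithinAt (fun s => Real.exp (a * (s - t₀)) * (y s - K))
        (Real.exp (a * (s - t₀)) * a * (y s - K) + Real.exp (a * (s - t₀)) * y' s)
        (Set.Icc t₀ t) s := h1.mul h3
    convert this using 1
    ring
  have hf_anti : AntitoneOn f (Set.Icc t₀ t) := by
    apply antitoneOn_of_deriv_nonpos (convex_Icc t₀ t)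
    · exact fun s hs => (hderiv s hs).continuousWithinAt
    · intro s hs
      rw [interior_Icc] at hs
      exact ((hderiv s (Set.Ioo_subset_Icc_self hs)).hasDerivAt
        (Icc_mem_nhds hs.1 hs.2)).differentiableAt.differentiableWithinAt
    · intro s hs
      rw [interior_Icc] at hs
      have hsIcc : s ∈ Set.Icc t₀ t := Set.Ioo_subset_Icc_self hs
      have hd := ((hderiv s hsIcc).hasDerivAt (Icc_mem_nhds hs.1 hs.2)).deriv
      rw [hd]
      have hgle : g s ≤ g t₀ := hg_mono ht₀mem hsIcc hs.1.le
      have h4 : y' s + a * (y s - K) ≤ 0 := by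
        have := hineq s hsIcc
        nlinarith
      exact mul_nonpos_of_nonneg_of_nonpos (Real.exp_pos _).le h4
  have hft : f t ≤ f t₀ := hf_anti ht₀mem htmem ht
  have hft₀ : f t₀ = y t₀ - K := by simp [hfdef]
  set E : ℝ := Real.exp (-a * (t - t₀)) with hEdef
  have hE1 : E * Real.exp (a * (t - t₀)) = 1 := by
    rw [hEdef, ← Real.exp_add]
    ring_nf
    exact Real.exp_zero
  have hEpos : 0 < E := Real.exp_pos _
  have hEle : E ≤ 1 := Real.exp_le_one_iff.2 (by nlinarith)
  have key : y t - K ≤ E * (y t₀ - K) := by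
    have := mul_le_mul_of_nonneg_left hft hEpos.le
    rw [hft₀] at this
    calc y t - K = E * Real.exp (a * (t - t₀)) * (y t - K) := by rw [hE1]; ring
    _ = E * f t := by rw [hfdef]; ring
    _ ≤ E * (y t₀ - K) := this
  have : y t ≤ E * y t₀ + K := by nlinarith
  calc y t ≤ E * y t₀ + K := this
  _ = E * y t₀ + c / a + g t₀ := by rw [hKdef]; ring
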